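/- arXiv:1601.03965 — 3 statements merged into one kernel-verified Lean document; each statement's English description precedes it below -/
import Mathlib

section
/- Let 0 < α < 1 and define K_α : (0,∞) → ℝ by K_α(r) = (1/π) · r^{α-1} sin(απ) / (r^{2α} + 2 r^α cos(απ) + 1). Then K_α(r) > 0 for all r > 0 and ∫_0^∞ K_α(r) dr = 1, so K_α is a probability density on (0,∞). -/
/-!
Completing the square, `x² + 2x cos θ + 1 = (x + cos θ)² + sin² θ`, so an arctangent primitive gives
`∫₀^∞ du / (u² + 2u cos θ + 1) = θ / sin θ` for `0 < θ < π`. With `θ = απ` the substitution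
`u = r^α` turns `∫₀^∞ K_α` into `(sin θ / (απ)) · θ / sin θ = 1`.
-/

open MeasureTheory Set Filter Real

lemma rpow_two_mul_eq_sq {x : ℝ} (hx : 0 ≤ x) (y : ℝ) : x ^ (2 * y) = (x ^ y) ^ 2 := by
  rw [mul_comm, ← rpow_natCast, ← rpow_mul hx, Nat.cast_ofNat]

lemma sq_add_two_mul_cos_add_one (x θ : ℝ) :
    x ^ 2 + 2 * x * cos θ + 1 = (x + cos θ) ^ 2 + sin θ ^ 2 := by
  linear_combination -cos_sq_add_sin_sq θ

lemma sq_add_two_mul_cos_add_one_pos {θ : ℝ} (hθ : θ ∈ Ioo 0 π) (x : ℝ) :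
    0 < x ^ 2 + 2 * x * cos θ + 1 := by
  have hs : 0 < sin θ := sin_pos_of_pos_of_lt_pi hθ.1 hθ.2
  rw [sq_add_two_mul_cos_add_one]
  positivity

lemma arctan_cos_div_sin {θ : ℝ} (hθ : θ ∈ Ioo 0 π) : arctan (cos θ / sin θ) = π / 2 - θ := by
  have hcot : cos θ / sin θ = tan (π / 2 - θ) := by
    rw [tan_eq_sin_div_cos, sin_pi_div_two_sub, cos_pi_div_two_sub]
  rw [hcot, arctan_tan (by linarith [hθ.2]) (by linarith [hθ.1])]

lemma integral_Ioi_inv_add_sq_add_sq {s : ℝ} (hs : 0 < s) (a c : ℝ) :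
    ∫ u in Ioi a, ((u + c) ^ 2 + s ^ 2)⁻¹ = (π / 2 - arctan ((a + c) / s)) / s := by
  have hderiv (u : ℝ) :
      HasDerivAt (fun u => s⁻¹ * arctan ((u + c) / s)) ((u + c) ^ 2 + s ^ 2)⁻¹ u := by
    have hlin : HasDerivAt (fun u => (u + c) / s) (1 / s) u := by
      simpa using ((hasDerivAt_id u).add_const c).div_const s
    refine (((hasDerivAt_arctan _).comp u hlin).const_mul s⁻¹).congr_deriv ?_
    field_simp
    ring
  have hlim : Tendsto (fun u => s⁻¹ * arctan ((u + c) / s)) atTop (nhds (s⁻¹ * (π / 2))) :=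
    ((tendsto_arctan_atTop.mono_right nhdsWithin_le_nhds).comp
      ((tendsto_atTop_add_const_right _ c tendsto_id).atTop_div_const hs)).const_mul _
  rw [integral_Ioi_of_hasDerivAt_of_nonneg' (fun u _ => hderiv u) (fun u _ => by positivity) hlim]
  ring

lemma integral_Ioi_inv_sq_add_two_mul_cos_add_one {θ : ℝ} (hθ : θ ∈ Ioo 0 π) :
    ∫ u in Ioi (0 : ℝ), (u ^ 2 + 2 * u * cos θ + 1)⁻¹ = θ / sin θ := by
  have hs : 0 < sin θ := sin_pos_of_pos_of_lt_pi hθ.1 hθ.2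
  simp_rw [sq_add_two_mul_cos_add_one]
  rw [integral_Ioi_inv_add_sq_add_sq hs, zero_add, arctan_cos_div_sin hθ]
  ring

lemma integral_Ioi_rpow_sub_one_div_rpow_two_mul_add {α θ : ℝ} (hα : 0 < α) (hθ : θ ∈ Ioo 0 π) :
    ∫ r in Ioi (0 : ℝ), r ^ (α - 1) / (r ^ (2 * α) + 2 * r ^ α * cos θ + 1) = θ / (α * sin θ) := by
  have hsub := integral_comp_rpow_Ioi_of_pos (g := fun u => (u ^ 2 + 2 * u * cos θ + 1)⁻¹) hα
  rw [integral_Ioi_inv_sq_add_two_mul_cos_add_one hθ] at hsub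
  calc ∫ r in Ioi (0 : ℝ), r ^ (α - 1) / (r ^ (2 * α) + 2 * r ^ α * cos θ + 1)
      = α⁻¹ * ∫ r in Ioi (0 : ℝ), (α * r ^ (α - 1)) • ((r ^ α) ^ 2 + 2 * r ^ α * cos θ + 1)⁻¹ := by
        rw [← integral_const_mul]
        refine setIntegral_congr_fun measurableSet_Ioi fun r hr => ?_
        rw [rpow_two_mul_eq_sq hr.le, smul_eq_mul]
        field_simp
    _ = θ / (α * sin θ) := by
        rw [hsub]
        ring

/-- K_α is a probability density on (0,∞). -/
theorem Kalpha_probability_density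
    (α : ℝ) (hα : α ∈ Set.Ioo (0 : ℝ) 1)
    (K : ℝ → ℝ)
    (hK : ∀ r : ℝ, 0 < r →
      K r = (1 / Real.pi) * (r ^ (α - 1) * Real.sin (α * Real.pi)) /
        (r ^ (2 * α) + 2 * r ^ α * Real.cos (α * Real.pi) + 1)) :
    (∀ r : ℝ, 0 < r → 0 < K r) ∧ (∫ r in Set.Ioi (0 : ℝ), K r) = 1 := by
  obtain ⟨hα0, hα1⟩ := hα
  have hθ : α * π ∈ Ioo 0 π := ⟨by positivity, by nlinarith [pi_pos]⟩
  have hs : 0 < sin (α * π) := sin_pos_of_pos_of_lt_pi hθ.1 hθ.2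
  have hden_pos (r : ℝ) (hr : 0 < r) : 0 < r ^ (2 * α) + 2 * r ^ α * cos (α * π) + 1 := by
    rw [rpow_two_mul_eq_sq hr.le]
    exact sq_add_two_mul_cos_add_one_pos hθ _
  refine ⟨fun r hr => ?_, ?_⟩
  · rw [hK r hr]
    have := hden_pos r hr
    positivity
  calc ∫ r in Ioi (0 : ℝ), K r
      = sin (α * π) / π *
          ∫ r in Ioi (0 : ℝ), r ^ (α - 1) / (r ^ (2 * α) + 2 * r ^ α * cos (α * π) + 1) := by
        rw [← integral_const_mul]
        refine setIntegral_congr_fun measurableSet_Ioi fun r hr => ?_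
        rw [hK r hr]
        ring
    _ = 1 := by
        rw [integral_Ioi_rpow_sub_one_div_rpow_two_mul_add hα0 hθ]
        field_simp
end

section
/- Let λ : [0,∞) → [0,∞) be continuous with Λ(t) = ∫_0^t λ(u) du, and let n ≥ 1 be an integer. Let Y be a non-negative random variable on a probability space. Then Σ_{x=n}^{∞} E[ e^{-Λ(Y)} Λ(Y)^x / x! ] = ∫_0^∞ P(Y > u) · λ(u) e^{-Λ(u)} Λ(u)^{n-1} / (n-1)! du. In particular, when Y = Y_α(t) this gives the distribution function P(T_n ≤ t) of the n-th arrival time T_n of the fractional non-homogeneous Poisson process, generalizing the Erlang distribution. -/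
/-!
If `N` is Poisson with mean `r`, then `P(N ≥ m + 1) = ∫₀ʳ e⁻ˢ sᵐ / m! ds`: both sides vanish at
`r = 0` and have derivative `e⁻ʳ rᵐ / m!`. The substitution `s = Λ(u)` turns the right side at
`r = Λ(y)` into `G(y) = ∫₀ʸ λ(u) e^{-Λ(u)} Λ(u)ᵐ / m! du`, so, by dominated convergence (the tails
are bounded by `1`), the left side of the theorem is `E[G(Y)]`. The layer cake formula
`E[G(Y)] = ∫₀^∞ P(Y > u) G'(u) du` finishes the proof. Extending `λ` to `ℝ` by `u ↦ λ(max u 0)`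
makes `Λ` a `C¹` function on all of `ℝ` without changing either side.
-/

open MeasureTheory ProbabilityTheory Set
open Real Nat

theorem hasDerivAt_sum_range_exp_neg_mul_pow_div_factorial (m : ℕ) (r : ℝ) :
    HasDerivAt (fun s => ∑ x ∈ Finset.range (m + 1), exp (-s) * s ^ x / x !)
      (-(exp (-r) * r ^ m / m !)) r := by
  induction m with
  | zero => simpa using (hasDerivAt_neg r).exp
  | succ m ih =>
    simp_rw [Finset.sum_range_succ _ (m + 1)]
    have hterm : HasDerivAt (fun s => exp (-s) * s ^ (m + 1) / (m + 1)!)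
        ((-exp (-r) * r ^ (m + 1) + exp (-r) * ((m + 1 : ℕ) * r ^ m)) / (m + 1)!) r :=
      (((hasDerivAt_neg r).exp.congr_deriv (by ring)).mul (hasDerivAt_pow (m + 1) r)).div_const _
    refine (ih.add hterm).congr_deriv ?_
    rw [factorial_succ]
    push_cast
    field_simp
    ring

theorem integral_exp_neg_mul_pow_div_factorial (m : ℕ) (r : ℝ) :
    ∫ s in 0..r, exp (-s) * s ^ m / m ! =
      1 - ∑ x ∈ Finset.range (m + 1), exp (-r) * r ^ x / x ! := by
  rw [intervalIntegral.integral_eq_sub_of_hasDerivAt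
    (f := fun s => -∑ x ∈ Finset.range (m + 1), exp (-s) * s ^ x / x !)
    (fun s _ => (hasDerivAt_sum_range_exp_neg_mul_pow_div_factorial m s).neg.congr_deriv (neg_neg _))
    ((by fun_prop : Continuous fun s : ℝ => exp (-s) * s ^ m / m !).intervalIntegrable _ _)]
  simp [Finset.sum_range_succ', Finset.sum_eq_zero]
  ring

theorem integral_exp_neg_mul_pow_div_factorial_le_one (m : ℕ) {r : ℝ} (hr : 0 ≤ r) :
    ∫ s in 0..r, exp (-s) * s ^ m / m ! ≤ 1 := by
  rw [integral_exp_neg_mul_pow_div_factorial]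
  exact sub_le_self _ (Finset.sum_nonneg fun x _ => by positivity)

theorem hasSum_exp_neg_mul_pow_div_factorial (r : ℝ) :
    HasSum (fun x : ℕ => exp (-r) * r ^ x / x !) 1 := by
  simpa only [mul_div_assoc, ← exp_eq_exp_ℝ, ← exp_add, neg_add_cancel, exp_zero] using
    (NormedSpace.expSeries_div_hasSum_exp r).mul_left (exp (-r))

theorem hasSum_exp_neg_mul_pow_div_factorial_tail (m : ℕ) (r : ℝ) :
    HasSum (fun k => exp (-r) * r ^ (m + 1 + k) / (m + 1 + k)!)
      (∫ s in 0..r, exp (-s) * s ^ m / m !) := by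
  rw [integral_exp_neg_mul_pow_div_factorial]
  simpa only [add_comm _ (m + 1)] using
    (hasSum_nat_add_iff' (m + 1)).mpr (hasSum_exp_neg_mul_pow_div_factorial r)

theorem integral_mul_exp_neg_mul_pow_div_factorial_comp {Λ L : ℝ → ℝ}
    (hΛ : ∀ t, HasDerivAt Λ (L t) t) (hL : Continuous L) (hΛ0 : Λ 0 = 0) (m : ℕ) (y : ℝ) :
    ∫ u in 0..y, L u * exp (-Λ u) * Λ u ^ m / m ! = ∫ s in 0..Λ y, exp (-s) * s ^ m / m ! := by
  rw [← hΛ0, ← intervalIntegral.integral_comp_mul_deriv (fun u _ => hΛ u) hL.continuousOn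
    (by fun_prop)]
  congr 1 with u
  simp only [Function.comp]
  ring

theorem hasSum_integral_of_nonneg_of_integrable {α : Type*} [MeasurableSpace α] {μ : Measure α}
    {F : ℕ → α → ℝ} {G : α → ℝ} (hF : ∀ k, AEStronglyMeasurable (F k) μ)
    (hF0 : ∀ k, 0 ≤ᵐ[μ] F k) (hG : Integrable G μ) (hFG : ∀ᵐ ω ∂μ, HasSum (F · ω) (G ω)) :
    HasSum (fun k => ∫ ω, F k ω ∂μ) (∫ ω, G ω ∂μ) := by
  refine hasSum_integral_of_dominated_convergence F hF (fun k => ?_)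
    (hFG.mono fun ω h => h.summable) (hG.congr (hFG.mono fun ω h => h.tsum_eq.symm)) hFG
  filter_upwards [hF0 k] with ω h
  rw [Real.norm_of_nonneg h]

theorem integral_comp_eq_integral_meas_lt_mul {α : Type*} [MeasurableSpace α]
    (μ : Measure α) [IsFiniteMeasure μ] {Y : α → ℝ} (hY : Measurable Y) (hY0 : ∀ ω, 0 ≤ Y ω)
    {g : ℝ → ℝ} (hg : Continuous g) (hg0 : ∀ t, 0 ≤ t → 0 ≤ g t) :
    ∫ ω, (∫ t in 0..Y ω, g t) ∂μ = ∫ t in Ioi 0, (μ {ω | t < Y ω}).toReal * g t := by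
  have hG0 : ∀ ω, 0 ≤ ∫ t in 0..Y ω, g t := fun ω =>
    intervalIntegral.integral_nonneg (hY0 ω) fun t ht => hg0 t ht.1
  have hGY : Measurable fun ω => ∫ t in 0..Y ω, g t :=
    (intervalIntegral.continuous_primitive hg.intervalIntegrable 0).measurable.comp hY
  have htail : Measurable fun t : ℝ => (μ {ω | t < Y ω}).toReal :=
    Antitone.measurable fun s t hst =>
      ENNReal.toReal_mono (measure_ne_top _ _) (measure_mono fun ω h => hst.trans_lt h)
  rw [integral_eq_lintegral_of_nonneg_ae (ae_of_all _ hG0) hGY.aestronglyMeasurable,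
    integral_eq_lintegral_of_nonneg_ae
      ((ae_restrict_iff' measurableSet_Ioi).2 (ae_of_all _ fun t ht =>
        mul_nonneg ENNReal.toReal_nonneg (hg0 t (le_of_lt ht))))
      (htail.mul hg.measurable).aestronglyMeasurable,
    lintegral_comp_eq_lintegral_meas_lt_mul μ (ae_of_all _ hY0) hY.aemeasurable
      (fun t _ => hg.intervalIntegrable 0 t)
      ((ae_restrict_iff' measurableSet_Ioi).2 (ae_of_all _ fun t ht => hg0 t (le_of_lt ht)))]
  congr 1
  refine setLIntegral_congr_fun measurableSet_Ioi fun t _ => ?_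
  rw [ENNReal.ofReal_mul ENNReal.toReal_nonneg, ENNReal.ofReal_toReal (measure_ne_top _ _)]

theorem tsum_integral_poisson_tail_comp_eq_setIntegral {Ω : Type*} [MeasurableSpace Ω]
    (μ : Measure Ω) [IsFiniteMeasure μ] {L : ℝ → ℝ} (hL : Continuous L)
    (hL0 : ∀ u, 0 ≤ u → 0 ≤ L u) (Λ : ℝ → ℝ) (hΛ : ∀ t, Λ t = ∫ u in 0..t, L u) (m : ℕ)
    {Y : Ω → ℝ} (hY : Measurable Y) (hY0 : ∀ ω, 0 ≤ Y ω) :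
    ∑' k, ∫ ω, exp (-Λ (Y ω)) * Λ (Y ω) ^ (m + 1 + k) / (m + 1 + k)! ∂μ =
      ∫ u in Ioi 0, (μ {ω | u < Y ω}).toReal * (L u * exp (-Λ u) * Λ u ^ m / m !) := by
  have hΛ' : ∀ t, HasDerivAt Λ (L t) t := fun t => by
    rw [funext hΛ]; exact (hL.integral_hasStrictDerivAt 0 t).hasDerivAt
  have hΛc : Continuous Λ := continuous_iff_continuousAt.2 fun t => (hΛ' t).continuousAt
  have hΛ0 : ∀ t, 0 ≤ t → 0 ≤ Λ t := fun t ht => by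
    rw [hΛ]; exact intervalIntegral.integral_nonneg ht fun u hu => hL0 u hu.1
  rw [← integral_comp_eq_integral_meas_lt_mul μ hY hY0 (by fun_prop)
    fun u hu => by have := hL0 u hu; have := hΛ0 u hu; positivity]
  simp_rw [integral_mul_exp_neg_mul_pow_div_factorial_comp hΛ' hL
    (by rw [hΛ, intervalIntegral.integral_same])]
  refine (hasSum_integral_of_nonneg_of_integrable (fun k => by fun_prop)
    (fun k => ae_of_all _ fun ω => by have := hΛ0 _ (hY0 ω); positivity) ?_
    (ae_of_all _ fun ω => hasSum_exp_neg_mul_pow_div_factorial_tail m _)).tsum_eq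
  refine .of_bound (by fun_prop) 1 (ae_of_all _ fun ω => ?_)
  have hr := hΛ0 _ (hY0 ω)
  rw [Real.norm_of_nonneg (intervalIntegral.integral_nonneg hr fun s hs => by
    have := hs.1; positivity)]
  exact integral_exp_neg_mul_pow_div_factorial_le_one m hr

/-- distribution of the arrival times of the fractional
non-homogeneous Poisson process (generalized Erlang distribution):
Σ_{x=n}^∞ E[e^{-Λ(Y)} Λ(Y)^x / x!] = ∫_0^∞ P(Y > u) λ(u) e^{-Λ(u)} Λ(u)^{n-1}/(n-1)! du. -/
theorem fnpp_arrival_time_distribution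
    {Ω : Type*} [MeasureSpace Ω] [IsProbabilityMeasure (ℙ : Measure Ω)]
    (lam : ℝ → ℝ) (hcont : ContinuousOn lam (Ici 0))
    (hnn : ∀ u : ℝ, 0 ≤ u → 0 ≤ lam u)
    (Λ : ℝ → ℝ) (hΛ : ∀ t : ℝ, Λ t = ∫ u in (0 : ℝ)..t, lam u)
    (n : ℕ) (hn : 1 ≤ n)
    (Y : Ω → ℝ) (hYmeas : Measurable Y) (hYnn : ∀ ω, 0 ≤ Y ω) :
    ∑' k : ℕ, ∫ ω, Real.exp (-(Λ (Y ω))) * (Λ (Y ω)) ^ (n + k) / (Nat.factorial (n + k)) =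
      ∫ u in Set.Ioi (0 : ℝ),
        (ℙ {ω | u < Y ω}).toReal *
          (lam u * Real.exp (-(Λ u)) * (Λ u) ^ (n - 1) / (Nat.factorial (n - 1))) := by
  obtain ⟨m, rfl⟩ := Nat.exists_eq_add_of_le' hn
  set L : ℝ → ℝ := fun u => lam (max u 0)
  set Φ : ℝ → ℝ := fun t => ∫ u in 0..t, L u
  have hL : Continuous L := hcont.comp_continuous (by fun_prop) fun u => le_max_right u 0
  have hLlam : ∀ u, 0 ≤ u → L u = lam u := fun u hu => by simp only [L, max_eq_left hu]
  have hΦΛ : ∀ t, 0 ≤ t → Φ t = Λ t := fun t ht => by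
    rw [hΛ]
    exact intervalIntegral.integral_congr fun u hu =>
      hLlam u (by rw [uIcc_of_le ht] at hu; exact hu.1)
  calc _ = ∑' k, ∫ ω, exp (-Φ (Y ω)) * Φ (Y ω) ^ (m + 1 + k) / (m + 1 + k)! := by
        simp_rw [hΦΛ _ (hYnn _)]
    _ = ∫ u in Ioi 0, (ℙ {ω | u < Y ω}).toReal * (L u * exp (-Φ u) * Φ u ^ m / m !) :=
        tsum_integral_poisson_tail_comp_eq_setIntegral ℙ hL (fun u _ => hnn _ (le_max_right u 0))
          Φ (fun _ => rfl) m hYmeas hYnn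
    _ = _ := setIntegral_congr_fun measurableSet_Ioi fun u (hu : 0 < u) => by
        simp only [Nat.add_sub_cancel, hLlam u hu.le, hΦΛ u hu.le]
end

section
/- Let 0 < α < 1, let λ : [0,∞) → [0,∞) be bounded and continuous, Λ(s,t) = ∫_s^t λ(u) du, and fix v ≥ 0, y ∈ ℝ and r > 0. Write z = e^{iy} − 1 ∈ ℂ. Then ∫_0^∞ exp( Λ(v, u+v) z ) r^{α-1} e^{-u r^α} du = r^{-α} [ r^{α-1} + z ∫_0^∞ λ(u+v) exp( Λ(v, u+v) z ) r^{α-1} e^{-u r^α} du ], where both integrals converge absolutely. -/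
/-!
Write `F u = exp (Λ(v, u + v) z)` and `K u = c e^{-βu}` with `c = r^{α-1}`, `β = r^α`.
Since `Λ(v, ·)` is nonnegative and `Re z ≤ 0`, `F` is bounded by `1`; it tends to `1` at `0⁺` and
has derivative `z λ(u + v) F u`. Integrating by parts on `(0, ∞)` against `K' = -β K`, the
boundary terms are `c` at `0` and `0` at infinity, so `β ∫ F K = c + z ∫ λ(· + v) F K`.
-/

open MeasureTheory Set Filter Topology

noncomputable def expKernel (c β u : ℝ) : ℂ := ((c * Real.exp (-(u * β)) : ℝ) : ℂ)

section expKernel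

variable {c β : ℝ}

theorem hasDerivAt_expKernel (u : ℝ) :
    HasDerivAt (expKernel c β) (-β * expKernel c β u) u := by
  have h : HasDerivAt (fun u => c * Real.exp (-(u * β))) (c * (Real.exp (-(u * β)) * -β)) u :=
    (hasDerivAt_mul_const β).neg.exp.const_mul c
  refine h.ofReal_comp.congr_deriv ?_
  push_cast [expKernel]
  ring

theorem integrableOn_expKernel (hβ : 0 < β) : IntegrableOn (expKernel c β) (Ioi 0) := by
  have : IntegrableOn (fun u => ((c * Real.exp (-β * u) : ℝ) : ℂ)) (Ioi 0) :=
    ((exp_neg_integrableOn_Ioi 0 hβ).const_mul c).ofReal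
  refine this.congr_fun (fun u _ => ?_) measurableSet_Ioi
  simp only [expKernel, neg_mul, mul_comm β]

theorem tendsto_expKernel_atTop (hβ : 0 < β) : Tendsto (expKernel c β) atTop (𝓝 0) := by
  have : Tendsto (fun u => c * Real.exp (-(u * β))) atTop (𝓝 0) := by
    simpa using (Real.tendsto_exp_neg_atTop_nhds_zero.comp
      (tendsto_id.atTop_mul_const hβ)).const_mul c
  rw [← Complex.ofReal_zero]
  exact this.ofReal

theorem integrableOn_mul_expKernel (hβ : 0 < β) {g : ℝ → ℂ} {C : ℝ}
    (hg : AEStronglyMeasurable g (volume.restrict (Ioi 0))) (hC : ∀ u ∈ Ioi 0, ‖g u‖ ≤ C) :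
    IntegrableOn (fun u => g u * expKernel c β u) (Ioi 0) :=
  (integrableOn_expKernel hβ).bdd_mul hg (ae_restrict_of_forall_mem measurableSet_Ioi hC)

theorem integral_deriv_mul_expKernel (hβ : 0 < β) {F F' : ℝ → ℂ} {F₀ : ℂ} {C : ℝ}
    (hF : ∀ u ∈ Ioi 0, HasDerivAt F (F' u) u) (hF₀ : Tendsto F (𝓝[>] 0) (𝓝 F₀))
    (hC : ∀ u ∈ Ioi 0, ‖F u‖ ≤ C) (hF' : IntegrableOn (fun u => F' u * expKernel c β u) (Ioi 0)) :
    ∫ u in Ioi 0, F' u * expKernel c β u = β * (∫ u in Ioi 0, F u * expKernel c β u) - c * F₀ := by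
  have hFcont : ContinuousOn F (Ioi 0) := fun u hu => (hF u hu).continuousAt.continuousWithinAt
  have hFK := integrableOn_mul_expKernel (c := c) hβ
    (hFcont.aestronglyMeasurable measurableSet_Ioi) hC
  have hK₀ : Tendsto (expKernel c β) (𝓝[>] 0) (𝓝 c) := by
    have := (hasDerivAt_expKernel (c := c) (β := β) 0).continuousAt.tendsto.mono_left
      (nhdsWithin_le_nhds (s := Ioi 0))
    simpa [expKernel] using this
  have hinfty : Tendsto (F * expKernel c β) atTop (𝓝 0) :=
    isBoundedUnder_le_mul_tendsto_zero
      ⟨C, eventually_map.2 (eventually_gt_atTop 0 |>.mono hC)⟩ (tendsto_expKernel_atTop hβ)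
  have hparts := integral_Ioi_mul_deriv_eq_deriv_mul hF (fun u _ => hasDerivAt_expKernel u)
    (by simpa only [IntegrableOn, Pi.mul_def, mul_left_comm] using hFK.const_mul (-β : ℂ)) hF'
    (hF₀.mul hK₀) hinfty
  have hpull : ∫ u in Ioi 0, F u * (-β * expKernel c β u) =
      -β * ∫ u in Ioi 0, F u * expKernel c β u := by
    simp only [mul_left_comm (F _), integral_const_mul]
  rw [hpull] at hparts
  linear_combination hparts

end expKernel

section primitive

variable {E : Type*} [NormedAddCommGroup E] [NormedSpace ℝ E] {f : ℝ → E} {a : ℝ}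

theorem hasDerivAt_integral_of_continuousOn_Ici [CompleteSpace E] (hf : ContinuousOn f (Ici a))
    {b : ℝ} (hb : a < b) : HasDerivAt (fun t => ∫ x in a..t, f x) (f b) b :=
  intervalIntegral.integral_hasDerivAt_right
    ((hf.mono Icc_subset_Ici_self).intervalIntegrable_of_Icc hb.le)
    ((hf.mono Ioi_subset_Ici_self).stronglyMeasurableAtFilter isOpen_Ioi b hb)
    (hf.continuousAt (Ici_mem_nhds hb))

theorem tendsto_integral_nhdsGT_of_continuousOn_Ici (hf : ContinuousOn f (Ici a)) :
    Tendsto (fun t => ∫ x in a..t, f x) (𝓝[>] a) (𝓝 0) := by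
  have hint : IntervalIntegrable f volume (min a a) (max a (a + 1)) := by
    rw [min_self, max_eq_right (by linarith)]
    exact (hf.mono Icc_subset_Ici_self).intervalIntegrable_of_Icc (by linarith)
  have h := intervalIntegral.continuousWithinAt_primitive (b₀ := a) Real.volume_singleton hint
  simpa using (h.mono_of_mem_nhdsWithin (Icc_mem_nhdsGT (lt_add_one a))).tendsto

end primitive

theorem re_cexp_mul_I_sub_one_nonpos (y : ℝ) : (Complex.exp (y * Complex.I) - 1).re ≤ 0 := by
  simpa [Complex.exp_ofReal_mul_I_re] using Real.cos_le_one y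

theorem norm_cexp_ofReal_mul_le_one {p : ℝ} {z : ℂ} (hp : 0 ≤ p) (hz : z.re ≤ 0) :
    ‖Complex.exp (p * z)‖ ≤ 1 := by
  rw [Complex.norm_exp, Complex.re_ofReal_mul, Real.exp_le_one_iff]
  exact mul_nonpos_of_nonneg_of_nonpos hp hz

section cexpIntegral

variable {g : ℝ → ℝ} (z : ℂ)

theorem hasDerivAt_cexp_integral_mul (hg : ContinuousOn g (Ici 0)) {u : ℝ} (hu : 0 < u) :
    HasDerivAt (fun t => Complex.exp ((∫ x in 0..t, g x : ℝ) * z))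
      (z * (g u * Complex.exp ((∫ x in 0..u, g x : ℝ) * z))) u := by
  convert ((hasDerivAt_integral_of_continuousOn_Ici hg hu).ofReal_comp.mul_const z).cexp using 1
  ring

theorem tendsto_cexp_integral_mul_nhdsGT (hg : ContinuousOn g (Ici 0)) :
    Tendsto (fun t => Complex.exp ((∫ x in 0..t, g x : ℝ) * z)) (𝓝[>] 0) (𝓝 1) := by
  have h := (((tendsto_integral_nhdsGT_of_continuousOn_Ici hg).ofReal).mul_const z).cexp
  simpa using h

theorem laplace_cexp_integral_mul {c β M : ℝ} (hβ : 0 < β) (hg : ContinuousOn g (Ici 0))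
    (hg₀ : ∀ u, 0 ≤ u → 0 ≤ g u) (hgM : ∀ u, 0 ≤ u → g u ≤ M) (hz : z.re ≤ 0) :
    let F := fun u => Complex.exp ((∫ x in 0..u, g x : ℝ) * z)
    IntegrableOn (fun u => F u * expKernel c β u) (Ioi 0) ∧
    IntegrableOn (fun u => (g u : ℂ) * F u * expKernel c β u) (Ioi 0) ∧
    β * ∫ u in Ioi 0, F u * expKernel c β u =
      c + z * ∫ u in Ioi 0, (g u : ℂ) * F u * expKernel c β u := by
  intro F
  have hF : ∀ u ∈ Ioi 0, HasDerivAt F (z * (g u * F u)) u :=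
    fun u hu => hasDerivAt_cexp_integral_mul z hg hu
  have hFcont : ContinuousOn F (Ioi 0) := fun u hu => (hF u hu).continuousAt.continuousWithinAt
  have hF1 : ∀ u ∈ Ioi 0, ‖F u‖ ≤ 1 := fun u hu =>
    norm_cexp_ofReal_mul_le_one
      (intervalIntegral.integral_nonneg hu.out.le fun x hx => hg₀ x hx.1) hz
  have hgF : ∀ u ∈ Ioi 0, ‖(g u : ℂ) * F u‖ ≤ M := fun u hu => by
    rw [norm_mul, Complex.norm_real, Real.norm_of_nonneg (hg₀ u hu.out.le)]
    exact (mul_le_of_le_one_right (hg₀ u hu.out.le) (hF1 u hu)).trans (hgM u hu.out.le)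
  have hgFK : IntegrableOn (fun u => (g u : ℂ) * F u * expKernel c β u) (Ioi 0) :=
    integrableOn_mul_expKernel hβ
      (((Complex.continuous_ofReal.comp_continuousOn (hg.mono Ioi_subset_Ici_self)).mul
        hFcont).aestronglyMeasurable measurableSet_Ioi) hgF
  have hparts := integral_deriv_mul_expKernel hβ hF (tendsto_cexp_integral_mul_nhdsGT z hg) hF1
    (by simpa only [IntegrableOn, mul_assoc z] using hgFK.const_mul z)
  simp only [mul_assoc z, integral_const_mul, mul_one] at hparts
  refine ⟨integrableOn_mul_expKernel hβ (hFcont.aestronglyMeasurable measurableSet_Ioi) hF1,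
    hgFK, ?_⟩
  rw [hparts, add_sub_cancel]

end cexpIntegral

theorem fnpp_laplace_integration_by_parts_general
    (α : ℝ)
    (lam : ℝ → ℝ) (hcont : ContinuousOn lam (Ici 0))
    (hnn : ∀ u : ℝ, 0 ≤ u → 0 ≤ lam u)
    (hbdd : ∃ M : ℝ, ∀ u : ℝ, 0 ≤ u → lam u ≤ M)
    (Λ : ℝ → ℝ → ℝ) (hΛ : ∀ s t : ℝ, Λ s t = ∫ u in s..t, lam u)
    (v : ℝ) (hv : 0 ≤ v) (y : ℝ) (r : ℝ) (hr : 0 < r)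
    (z : ℂ) (hz : z = Complex.exp (y * Complex.I) - 1) :
    IntegrableOn (fun u : ℝ =>
        Complex.exp ((Λ v (u + v) : ℂ) * z) *
          ((r ^ (α - 1) * Real.exp (-(u * r ^ α)) : ℝ) : ℂ)) (Set.Ioi 0) ∧
    IntegrableOn (fun u : ℝ =>
        (lam (u + v) : ℂ) * Complex.exp ((Λ v (u + v) : ℂ) * z) *
          ((r ^ (α - 1) * Real.exp (-(u * r ^ α)) : ℝ) : ℂ)) (Set.Ioi 0) ∧
    (∫ u in Set.Ioi (0 : ℝ),
        Complex.exp ((Λ v (u + v) : ℂ) * z) *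
          ((r ^ (α - 1) * Real.exp (-(u * r ^ α)) : ℝ) : ℂ)) =
      ((r ^ (-α) : ℝ) : ℂ) *
        (((r ^ (α - 1) : ℝ) : ℂ) +
          z * ∫ u in Set.Ioi (0 : ℝ),
            (lam (u + v) : ℂ) * Complex.exp ((Λ v (u + v) : ℂ) * z) *
              ((r ^ (α - 1) * Real.exp (-(u * r ^ α)) : ℝ) : ℂ)) := by
  obtain ⟨M, hM⟩ := hbdd
  have hΛshift : ∀ u, Λ v (u + v) = ∫ x in 0..u, lam (x + v) := fun u => by
    rw [hΛ, intervalIntegral.integral_comp_add_right, zero_add]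
  have hβ : 0 < r ^ α := Real.rpow_pos_of_pos hr α
  obtain ⟨hFK, hgFK, hparts⟩ := laplace_cexp_integral_mul (c := r ^ (α - 1)) z hβ
    (hcont.comp (continuous_add_const v).continuousOn fun x hx => add_nonneg hx hv)
    (fun u hu => hnn _ (add_nonneg hu hv)) (fun u hu => hM _ (add_nonneg hu hv))
    (hz ▸ re_cexp_mul_I_sub_one_nonpos y)
  simp only [hΛshift]
  refine ⟨hFK, hgFK, ?_⟩
  rw [Real.rpow_neg hr.le, Complex.ofReal_inv, eq_inv_mul_iff_mul_eq₀ (by exact_mod_cast hβ.ne')]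
  exact hparts

/-- integration-by-parts identity in Laplace space, the central
computation in the proof of the governing equation of the FNPP. -/
theorem fnpp_laplace_integration_by_parts
    (α : ℝ) (hα : α ∈ Set.Ioo (0 : ℝ) 1)
    (lam : ℝ → ℝ) (hcont : ContinuousOn lam (Ici 0))
    (hnn : ∀ u : ℝ, 0 ≤ u → 0 ≤ lam u)
    (hbdd : ∃ M : ℝ, ∀ u : ℝ, 0 ≤ u → lam u ≤ M)
    (Λ : ℝ → ℝ → ℝ) (hΛ : ∀ s t : ℝ, Λ s t = ∫ u in s..t, lam u)
    (v : ℝ) (hv : 0 ≤ v) (y : ℝ) (r : ℝ) (hr : 0 < r)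
    (z : ℂ) (hz : z = Complex.exp (y * Complex.I) - 1) :
    IntegrableOn (fun u : ℝ =>
        Complex.exp ((Λ v (u + v) : ℂ) * z) *
          ((r ^ (α - 1) * Real.exp (-(u * r ^ α)) : ℝ) : ℂ)) (Set.Ioi 0) ∧
    IntegrableOn (fun u : ℝ =>
        (lam (u + v) : ℂ) * Complex.exp ((Λ v (u + v) : ℂ) * z) *
          ((r ^ (α - 1) * Real.exp (-(u * r ^ α)) : ℝ) : ℂ)) (Set.Ioi 0) ∧
    (∫ u in Set.Ioi (0 : ℝ),
        Complex.exp ((Λ v (u + v) : ℂ) * z) *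
          ((r ^ (α - 1) * Real.exp (-(u * r ^ α)) : ℝ) : ℂ)) =
      ((r ^ (-α) : ℝ) : ℂ) *
        (((r ^ (α - 1) : ℝ) : ℂ) +
          z * ∫ u in Set.Ioi (0 : ℝ),
            (lam (u + v) : ℂ) * Complex.exp ((Λ v (u + v) : ℂ) * z) *
              ((r ^ (α - 1) * Real.exp (-(u * r ^ α)) : ℝ) : ℂ)) :=
  fnpp_laplace_integration_by_parts_general α lam hcont hnn hbdd Λ hΛ v hv y r hr z hz
end
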